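/- arXiv:0905.4048 — 2 statements merged into one kernel-verified Lean document; each statement's English description precedes it below -/
import Mathlib

section
/- Let q ∈ R be such that ℓ = card(R/qR) is a rational prime with ℓ > n. Then conj(q) ∉ qR; equivalently, the colouring induced by qR is chirally perfect but not perfect (H = G'). -/
open Complex

/-- The primitive `n`-th root of unity `ζ = exp(2πi/n)`. -/
noncomputable def zeta (n : ℕ) : ℂ := Complex.exp (2 * Real.pi * Complex.I / n)

/-- The ring of cyclotomic integers `M_n = ℤ[ζ_n]`, as a subring of `ℂ`. -/
noncomputable def Rn (n : ℕ) : Subring ℂ := Subring.closure {zeta n}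

/-- `ζ_n` as an element of `M_n`. -/
noncomputable def zetaR (n : ℕ) : ↥(Rn n) := ⟨zeta n, Subring.subset_closure rfl⟩

/-- `z ∈ ℂ` lies in the ideal `I` of `Rn n` (viewed inside `ℂ`). -/
def InIdeal (n : ℕ) (I : Ideal ↥(Rn n)) (z : ℂ) : Prop :=
  ∃ w : ↥(Rn n), w ∈ I ∧ (w : ℂ) = z

/-- An isometry of the complex plane: `z ↦ a z + b` or `z ↦ a conj z + b` with `|a| = 1`. -/
def IsIsometry (g : ℂ → ℂ) : Prop :=
  ∃ a b : ℂ, ‖a‖ = 1 ∧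
    ((∀ z, g z = a * z + b) ∨ (∀ z, g z = a * (starRingEnd ℂ) z + b))

/-- An orientation-preserving isometry of the complex plane: `z ↦ a z + b` with `|a| = 1`. -/
def IsOPIsometry (g : ℂ → ℂ) : Prop :=
  ∃ a b : ℂ, ‖a‖ = 1 ∧ ∀ z, g z = a * z + b

/-- `g` is a colour symmetry of the colouring of `Rn n` induced by the ideal `I`. -/
def IsColourSym (n : ℕ) (I : Ideal ↥(Rn n)) (g : ℂ → ℂ) : Prop :=
  ∀ x y : ℂ, x ∈ Rn n → y ∈ Rn n → (InIdeal n I (x - y) ↔ InIdeal n I (g x - g y))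

/-- The colouring induced by `I` is perfect. -/
def IsPerfectColouring (n : ℕ) (I : Ideal ↥(Rn n)) : Prop :=
  ∀ g : ℂ → ℂ, IsIsometry g → g '' (Rn n : Set ℂ) = (Rn n : Set ℂ) → IsColourSym n I g

/-- The colouring induced by `I` is chirally perfect. -/
def IsChirallyPerfectColouring (n : ℕ) (I : Ideal ↥(Rn n)) : Prop :=
  ∀ g : ℂ → ℂ, IsOPIsometry g → g '' (Rn n : Set ℂ) = (Rn n : Set ℂ) → IsColourSym n I g

/-! If `conj q ∈ qR`, conjugation descends to a ring endomorphism of `R/qR`. This ring has prime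
order `ℓ`, so it is `𝔽_ℓ` and the endomorphism is the identity; hence the image `u` of `ζ` equals
the image of `conj ζ = ζ⁻¹`, i.e. `u² = 1`. But `ℓ ∤ n`, so the roots of `Φ_n` in `𝔽_ℓ` are
primitive `n`-th roots of unity and `u` has order `n ≥ 3`.

Every rotation `z ↦ a z + b` mapping `R` onto itself has `a ∈ Rˣ`, so it preserves every ideal;
conjugation, which does not preserve `qR`, shows that the colouring is not perfect. -/

open Polynomial ComplexConjugate

theorem IsPrimitiveRoot.map_of_natCast_ne_zero {R S : Type*} [CommRing R] [IsDomain R]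
    [CommRing S] [IsDomain S] {ζ : R} {n : ℕ} (hζ : IsPrimitiveRoot ζ n) (φ : R →+* S)
    [NeZero (n : S)] : IsPrimitiveRoot (φ ζ) n := by
  have hn : 0 < n := Nat.pos_of_ne_zero (NeZero.of_neZero_natCast S).out
  rw [← isRoot_cyclotomic_iff, ← map_cyclotomic n φ, IsRoot.def, eval_map, eval₂_hom,
    (hζ.isRoot_cyclotomic hn).eq_zero, map_zero]

theorem nonempty_ringEquiv_zmod_of_natCard_prime {A : Type*} [Ring A] (hA : (Nat.card A).Prime) :
    Nonempty (A ≃+* ZMod (Nat.card A)) := by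
  have := Nat.finite_of_card_ne_zero hA.ne_zero
  let := Fintype.ofFinite A
  exact ⟨(ZMod.ringEquivOfPrime A hA Nat.card_eq_fintype_card.symm).symm⟩

theorem RingHom.eq_id_of_natCard_prime {A : Type*} [Ring A] (hA : (Nat.card A).Prime)
    (f : A →+* A) : f = RingHom.id A := by
  obtain ⟨e⟩ := nonempty_ringEquiv_zmod_of_natCard_prime hA
  have hfe : f.comp e.symm.toRingHom = e.symm.toRingHom := Subsingleton.elim _ _
  ext x
  simpa using congr($hfe (e x))

theorem Ideal.Quotient.mk_comp_eq_of_natCard_prime {R : Type*} [CommRing R] {I : Ideal R}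
    (hI : (Nat.card (R ⧸ I)).Prime) (σ : R →+* R) (hσ : I ≤ I.comap σ) :
    (Ideal.Quotient.mk I).comp σ = Ideal.Quotient.mk I := by
  rw [← Ideal.quotientMap_comp_mk hσ, RingHom.eq_id_of_natCard_prime hI (Ideal.quotientMap I σ hσ),
    RingHom.id_comp]

theorem not_le_comap_of_natCard_prime {R : Type*} [CommRing R] [IsDomain R] {ζ : R} {n : ℕ}
    (hζ : IsPrimitiveRoot ζ n) (hn : 3 ≤ n) (σ : R →+* R) (hσζ : ζ * σ ζ = 1) {I : Ideal R}
    (hI : (Nat.card (R ⧸ I)).Prime) (hnI : n < Nat.card (R ⧸ I)) : ¬ I ≤ I.comap σ := by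
  intro hσ
  obtain ⟨e⟩ := nonempty_ringEquiv_zmod_of_natCard_prime hI
  have := Fact.mk hI
  have : NeZero (n : ZMod (Nat.card (R ⧸ I))) :=
    ⟨by rw [ne_eq, ZMod.natCast_eq_zero_iff]; exact Nat.not_dvd_of_pos_of_lt (by omega) hnI⟩
  let φ := e.toRingHom.comp (Ideal.Quotient.mk I)
  have hφσ : φ (σ ζ) = φ ζ :=
    congr_arg e (RingHom.congr_fun (Ideal.Quotient.mk_comp_eq_of_natCard_prime hI σ hσ) ζ)
  have hsq : φ ζ ^ 2 = 1 :=
    calc φ ζ ^ 2 = φ ζ * φ (σ ζ) := by rw [hφσ, sq]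
      _ = 1 := by rw [← map_mul, hσζ, map_one]
  have := Nat.le_of_dvd two_pos (((hζ.map_of_natCast_ne_zero φ).pow_eq_one_iff_dvd 2).mp hsq)
  omega

theorem zeta_isPrimitiveRoot {n : ℕ} (hn : n ≠ 0) : IsPrimitiveRoot (zeta n) n :=
  Complex.isPrimitiveRoot_exp n hn

theorem zetaR_isPrimitiveRoot {n : ℕ} (hn : n ≠ 0) : IsPrimitiveRoot (zetaR n) n :=
  IsPrimitiveRoot.of_map_of_injective (f := (Rn n).subtype) (zeta_isPrimitiveRoot hn)
    Subtype.val_injective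

theorem zeta_mul_conj {n : ℕ} (hn : n ≠ 0) : zeta n * conj (zeta n) = 1 := by
  rw [Complex.mul_conj, Complex.normSq_eq_norm_sq, (zeta_isPrimitiveRoot hn).norm'_eq_one hn]
  norm_num

theorem conj_zeta {n : ℕ} (hn : n ≠ 0) : conj (zeta n) = zeta n ^ (n - 1) := by
  refine mul_left_cancel₀ ((zeta_isPrimitiveRoot hn).ne_zero hn) ?_
  rw [zeta_mul_conj hn, ← pow_succ', Nat.sub_add_cancel (Nat.one_le_iff_ne_zero.mpr hn),
    (zeta_isPrimitiveRoot hn).pow_eq_one]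

theorem conj_mem_Rn {n : ℕ} (hn : n ≠ 0) {z : ℂ} (hz : z ∈ Rn n) : conj z ∈ Rn n := by
  have hle : Rn n ≤ (Rn n).comap (starRingEnd ℂ) := by
    refine Subring.closure_le.mpr (Set.singleton_subset_iff.mpr ?_)
    rw [SetLike.mem_coe, Subring.mem_comap, conj_zeta hn]
    exact pow_mem (zetaR n).2 _
  exact hle hz

noncomputable def conjRn (n : ℕ) (hn : n ≠ 0) : Rn n →+* Rn n :=
  (starRingEnd ℂ).restrict (Rn n) (Rn n) fun _ ↦ conj_mem_Rn hn

theorem conj_image_Rn {n : ℕ} (hn : n ≠ 0) : conj '' (Rn n : Set ℂ) = (Rn n : Set ℂ) := by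
  refine Set.Subset.antisymm ?_ fun z hz ↦ ⟨conj z, conj_mem_Rn hn hz, conj_conj z⟩
  rintro _ ⟨z, hz, rfl⟩
  exact conj_mem_Rn hn hz

theorem conj_not_inIdeal_span {n : ℕ} (hn : 3 ≤ n) (q : Rn n)
    (hprime : (Nat.card (Rn n ⧸ Ideal.span {q})).Prime)
    (hgt : n < Nat.card (Rn n ⧸ Ideal.span {q})) :
    ¬ InIdeal n (Ideal.span {q}) (conj (q : ℂ)) := by
  rintro ⟨w, hw, hwq⟩
  have hn0 : n ≠ 0 := by omega
  refine not_le_comap_of_natCard_prime (zetaR_isPrimitiveRoot hn0) hn (conjRn n hn0)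
    (Subtype.ext (zeta_mul_conj hn0)) hprime hgt ?_
  rw [Ideal.span_singleton_le_iff_mem, Ideal.mem_comap]
  convert hw
  exact Subtype.ext hwq.symm

theorem inIdeal_mul {n : ℕ} {I : Ideal (Rn n)} {a z : ℂ} (ha : a ∈ Rn n) (hz : InIdeal n I z) :
    InIdeal n I (a * z) := by
  obtain ⟨w, hw, rfl⟩ := hz
  exact ⟨⟨a, ha⟩ * w, I.mul_mem_left _ hw, rfl⟩

theorem isChirallyPerfectColouring (n : ℕ) (I : Ideal (Rn n)) :
    IsChirallyPerfectColouring n I := by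
  rintro g ⟨a, b, -, hg⟩ himg x y - -
  have hmem : ∀ z ∈ Rn n, a * z + b ∈ Rn n := fun z hz ↦ by
    rw [← hg, ← SetLike.mem_coe, ← himg]; exact Set.mem_image_of_mem g hz
  have hb : b ∈ Rn n := by simpa using hmem 0 (zero_mem _)
  have ha : a ∈ Rn n := by simpa using sub_mem (hmem 1 (one_mem _)) hb
  obtain ⟨c, hc, hca⟩ : ∃ c ∈ Rn n, c * a = 1 := by
    have : 1 + b ∈ (Rn n : Set ℂ) := add_mem (one_mem _) hb
    rw [← himg] at this
    obtain ⟨c, hc, hgc⟩ := this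
    exact ⟨c, hc, by linear_combination (hg c).symm.trans hgc⟩
  have hgxy : g x - g y = a * (x - y) := by rw [hg, hg]; ring
  rw [hgxy]
  refine ⟨inIdeal_mul ha, fun h ↦ ?_⟩
  simpa [← mul_assoc, hca] using inIdeal_mul hc h

theorem not_isPerfectColouring_span {n : ℕ} (hn : n ≠ 0) (q : Rn n)
    (hq : ¬ InIdeal n (Ideal.span {q}) (conj (q : ℂ))) :
    ¬ IsPerfectColouring n (Ideal.span {q}) := by
  intro hperf
  have hconj : IsIsometry conj := ⟨1, 0, by simp, Or.inr fun z ↦ by simp⟩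
  have hcol := hperf _ hconj (conj_image_Rn hn) q 0 q.2 (zero_mem _)
  refine hq ?_
  simpa using hcol.mp ⟨q, Ideal.mem_span_singleton_self q, by simp⟩

theorem stmt17_general (n : ℕ) (hn : 3 ≤ n) (q : ↥(Rn n))
    (hprime : (Nat.card (↥(Rn n) ⧸ Ideal.span {q})).Prime)
    (hgt : n < Nat.card (↥(Rn n) ⧸ Ideal.span {q})) :
    ¬ InIdeal n (Ideal.span {q}) ((starRingEnd ℂ) (q : ℂ)) ∧
    IsChirallyPerfectColouring n (Ideal.span {q}) ∧
    ¬ IsPerfectColouring n (Ideal.span {q}) := by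
  have hconj := conj_not_inIdeal_span hn q hprime hgt
  exact ⟨hconj, isChirallyPerfectColouring n _, not_isPerfectColouring_span (by omega) q hconj⟩

/-- if `ℓ = card(R/qR)` is a rational prime with `ℓ > n`, then
`conj q ∉ qR`; equivalently the colouring induced by `qR` is chirally perfect but not
perfect (`H = G'`). -/
theorem stmt17 (n : ℕ) (hn : 3 ≤ n) (hn2 : n % 4 ≠ 2) (q : ↥(Rn n))
    (hprime : (Nat.card (↥(Rn n) ⧸ Ideal.span {q})).Prime)
    (hgt : n < Nat.card (↥(Rn n) ⧸ Ideal.span {q})) :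
    ¬ InIdeal n (Ideal.span {q}) ((starRingEnd ℂ) (q : ℂ)) ∧
    IsChirallyPerfectColouring n (Ideal.span {q}) ∧
    ¬ IsPerfectColouring n (Ideal.span {q}) :=
  stmt17_general n hn q hprime hgt
end

section
/- Let φ denote Euler's totient function, and let I be a proper nonzero ideal of R with ℓ = card(R/I) finite, such that ℓ does not divide 2^{φ(n)} and ℓ does not divide n^{φ(n)}. Then every isometry g of the complex plane with g(R) = R satisfying g(x) − x ∈ I for all x ∈ R is a translation by an element of I: there exists t ∈ I such that g(z) = z + t for all z ∈ ℂ. That is, the colour preserving group K equals T_I. -/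
open Complex

open Polynomial NumberField
open scoped ComplexConjugate

/-!
Write `g` as `z ↦ a z + b` or `z ↦ a z̄ + b`. The colour condition at `0` and `1` gives `b ∈ I` and
`a - 1 ∈ I`, so `a` is a cyclotomic integer of absolute value one. Complex conjugation on the CM
field `ℚ(ζ)` commutes with every embedding, so all conjugates of `a` have absolute value one and,
by Kronecker, `a` is a root of unity in `ℚ(ζ)`, hence `a ^ (2n) = 1` and `a ^ n = ±1`. Since
`1 - a ∣ 1 - a ^ k`, `a ^ n = -1` puts `2` into `I`, while `a ^ n = 1`, `a ≠ 1` puts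
`n = ∑_{k<n} (1 - a ^ k)` into `I`. For a reflection, the condition at `ζ` also gives
`1 - ζ ^ 2 ∈ I`, hence `n ∈ I`. Finally `m ∈ I` makes `R/I` a quotient of `R/mR ≅ (ℤ/m)^φ(n)`,
so `ℓ ∣ m ^ φ(n)`; with the hypotheses on `ℓ` this leaves only translations, `a = 1`.
-/

theorem AddCommGroup.card_dvd_pow_of_span_eq_top {A : Type*} [AddCommGroup A] {m : ℕ}
    [Module (ZMod m) A] {ι : Type*} [Fintype ι] {v : ι → A}
    (hv : Submodule.span ℤ (Set.range v) = ⊤) : Nat.card A ∣ m ^ Fintype.card ι := by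
  have hspan : Submodule.span (ZMod m) (Set.range v) = ⊤ :=
    eq_top_iff.2 (hv.symm.le.trans (Submodule.span_le_restrictScalars ℤ (ZMod m) _))
  have hsurj : Function.Surjective (Fintype.linearCombination (ZMod m) v) := by
    rw [← LinearMap.range_eq_top, Fintype.range_linearCombination, hspan]
  simpa [Nat.card_fun] using
    AddSubgroup.card_dvd_of_surjective (Fintype.linearCombination (ZMod m) v).toAddMonoidHom hsurj

theorem Ideal.card_quotient_dvd_pow_of_span_eq_top {S : Type*} [CommRing S] (I : Ideal S)
    {ι : Type*} [Fintype ι] {v : ι → S} (hv : Submodule.span ℤ (Set.range v) = ⊤) {m : ℕ}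
    (hm : (m : S) ∈ I) : Nat.card (S ⧸ I) ∣ m ^ Fintype.card ι := by
  have hkill (x : S ⧸ I) : m • x = 0 := by
    obtain ⟨x, rfl⟩ := Ideal.Quotient.mk_surjective x
    rw [← map_nsmul, nsmul_eq_mul, Ideal.Quotient.eq_zero_iff_mem]
    exact I.mul_mem_right _ hm
  let _ := AddCommGroup.zmodModule hkill
  refine AddCommGroup.card_dvd_pow_of_span_eq_top (v := Ideal.Quotient.mk I ∘ v) ?_
  have hsurj := (Ideal.Quotient.mk I).toIntAlgHom.toLinearMap.range_eq_top.2
    Ideal.Quotient.mk_surjective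
  rw [Set.range_comp]
  simpa [hv, hsurj] using
    Submodule.span_image (Ideal.Quotient.mk I).toIntAlgHom.toLinearMap (s := Set.range v)

theorem Ideal.natCast_mem_of_pow_eq_one {S : Type*} [CommRing S] [IsDomain S] {I : Ideal S}
    {x : S} {m : ℕ} (hx : x ^ m = 1) (hx1 : x ≠ 1) (h : 1 - x ∈ I) : (m : S) ∈ I := by
  have hsum : ∑ i ∈ Finset.range m, x ^ i = 0 :=
    (mul_eq_zero.1 (by rw [mul_geom_sum, hx, sub_self])).resolve_left (sub_ne_zero.2 hx1)
  have hm : (m : S) = ∑ i ∈ Finset.range m, (1 - x ^ i) := by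
    simp [Finset.sum_sub_distrib, hsum]
  rw [hm]
  exact Ideal.sum_mem _ fun i _ => I.mem_of_dvd (by simpa using sub_dvd_pow_sub_pow 1 x i) h

theorem Ideal.two_mem_or_natCast_mem_of_pow_two_mul_eq_one {S : Type*} [CommRing S] [IsDomain S]
    {I : Ideal S} {x : S} {m : ℕ} (hx : x ^ (2 * m) = 1) (hx1 : x ≠ 1) (h : 1 - x ∈ I) :
    (2 : S) ∈ I ∨ (m : S) ∈ I := by
  rw [pow_mul', sq_eq_one_iff] at hx
  rcases hx with hx | hx
  · exact Or.inr (Ideal.natCast_mem_of_pow_eq_one hx hx1 h)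
  · have h2 := I.mem_of_dvd (by simpa using sub_dvd_pow_sub_pow 1 x m) h
    rw [hx, sub_neg_eq_add, one_add_one_eq_two] at h2
    exact Or.inl h2

theorem NumberField.IsCMField.isOfFinOrder_of_norm_eq_one {K : Type*} [Field K]
    [NumberField K] [IsCMField K] {x : K} (hx : IsIntegral ℤ x) {φ₀ : K →+* ℂ}
    (h : ‖φ₀ x‖ = 1) : IsOfFinOrder x := by
  have norm_sq (φ : K →+* ℂ) : (‖φ x‖ ^ 2 : ℂ) = φ (x * IsCMField.complexConj K x) := by
    rw [map_mul, IsCMField.complexEmbedding_complexConj, mul_conj, normSq_eq_norm_sq]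
    push_cast
    rfl
  have hconj : x * IsCMField.complexConj K x = 1 :=
    φ₀.injective (by rw [← norm_sq, h, map_one]; norm_num)
  obtain ⟨m, hm, hxm⟩ := Embeddings.pow_eq_one_of_norm_eq_one K ℂ hx fun φ => by
    have hφ := norm_sq φ
    rw [hconj, map_one] at hφ
    exact (pow_eq_one_iff_of_nonneg (norm_nonneg _) two_ne_zero).1 (by exact_mod_cast hφ)
  exact isOfFinOrder_iff_pow_eq_one.2 ⟨m, hm, hxm⟩

section InIdeal

variable {n : ℕ} {I : Ideal (Rn n)}

theorem InIdeal.sub {z w : ℂ} (hz : InIdeal n I z) (hw : InIdeal n I w) :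
    InIdeal n I (z - w) := by
  obtain ⟨z, hz, rfl⟩ := hz
  obtain ⟨w, hw, rfl⟩ := hw
  exact ⟨z - w, I.sub_mem hz hw, rfl⟩

theorem InIdeal.mul_left {x z : ℂ} (hx : x ∈ Rn n) (hz : InIdeal n I z) :
    InIdeal n I (x * z) := by
  obtain ⟨z, hz, rfl⟩ := hz
  exact ⟨⟨x, hx⟩ * z, I.mul_mem_left _ hz, rfl⟩

theorem inIdeal_coe_iff {w : Rn n} : InIdeal n I w ↔ w ∈ I :=
  ⟨fun ⟨_, hv, hvw⟩ => Subtype.ext hvw ▸ hv, fun hw => ⟨w, hw, rfl⟩⟩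

end InIdeal

namespace Rn

variable {n : ℕ}

theorem coe_zetaR : (zetaR n : ℂ) = zeta n := rfl

theorem isPrimitiveRoot_zeta (hn : n ≠ 0) : IsPrimitiveRoot (zeta n) n :=
  Complex.isPrimitiveRoot_exp n hn

theorem isPrimitiveRoot_zetaR (hn : n ≠ 0) : IsPrimitiveRoot (zetaR n) n :=
  (isPrimitiveRoot_zeta hn).of_map_of_injective (f := (Rn n).subtype) Subtype.val_injective

noncomputable def powerBasis (hn : n ≠ 0) : PowerBasis ℤ (Rn n) :=
  (Algebra.adjoin.powerBasis' ((isPrimitiveRoot_zeta hn).isIntegral (Nat.pos_of_ne_zero hn))).map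
    (Subring.closureEquivAdjoinInt _).symm

theorem powerBasis_dim (hn : n ≠ 0) : (powerBasis hn).dim = n.totient :=
  calc (powerBasis hn).dim = (minpoly ℤ (zeta n)).natDegree := rfl
    _ = n.totient := by
      rw [← cyclotomic_eq_minpoly (isPrimitiveRoot_zeta hn) (Nat.pos_of_ne_zero hn),
        natDegree_cyclotomic]

theorem isIntegral (hn : n ≠ 0) (a : Rn n) : IsIntegral ℤ a :=
  have := (powerBasis hn).finite
  Algebra.IsIntegral.isIntegral a

theorem card_quotient_dvd_pow (hn : n ≠ 0) (I : Ideal (Rn n)) {m : ℕ} (hm : (m : Rn n) ∈ I) :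
    Nat.card (Rn n ⧸ I) ∣ m ^ n.totient := by
  simpa [powerBasis_dim] using
    I.card_quotient_dvd_pow_of_span_eq_top (powerBasis hn).basis.span_eq hm

theorem le_adjoin_zeta : Rn n ≤ (IntermediateField.adjoin ℚ {zeta n}).toSubring :=
  Subring.closure_le.2 (by simp)

theorem isCyclotomicExtension_adjoin_zeta [NeZero n] :
    IsCyclotomicExtension {n} ℚ (IntermediateField.adjoin ℚ {zeta n}) := by
  have hζ := isPrimitiveRoot_zeta (NeZero.ne n)
  change IsCyclotomicExtension {n} ℚ (IntermediateField.adjoin ℚ {zeta n}).toSubalgebra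
  rw [IntermediateField.adjoin_simple_toSubalgebra_of_isAlgebraic
    (hζ.isIntegral (NeZero.pos n)).tower_top.isAlgebraic]
  exact hζ.adjoin_isCyclotomicExtension ℚ

theorem pow_two_mul_eq_one_of_norm_eq_one (hn : 2 < n) {a : Rn n} (ha : ‖(a : ℂ)‖ = 1) :
    a ^ (2 * n) = 1 := by
  have : NeZero n := ⟨by omega⟩
  let K := IntermediateField.adjoin ℚ {zeta n}
  have := isCyclotomicExtension_adjoin_zeta (n := n)
  have : NumberField K := IsCyclotomicExtension.numberField {n} ℚ K
  have : IsCMField K := IsCyclotomicExtension.Rat.isCMField K ⟨n, Set.mem_singleton n, hn⟩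
  let ι : Rn n →+* K := Subring.inclusion le_adjoin_zeta
  have hfin : IsOfFinOrder (ι a) := IsCMField.isOfFinOrder_of_norm_eq_one
    ((isIntegral (by omega) a).map ι.toIntAlgHom) (φ₀ := algebraMap K ℂ) ha
  have hord := (IsPrimitiveRoot.orderOf (ι a)).dvd_of_isCyclotomicExtension n hfin.orderOf_pos.ne'
  apply Subring.inclusion_injective le_adjoin_zeta
  rw [map_pow, map_one, ← orderOf_dvd_iff_pow_eq_one]
  exact hord

variable {I : Ideal (Rn n)}

theorem eq_one_of_inIdeal_sub_one (hn : 2 < n) (hI2 : (2 : Rn n) ∉ I) (hIn : (n : Rn n) ∉ I)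
    {a : ℂ} (ha : ‖a‖ = 1) (h : InIdeal n I (a - 1)) : a = 1 := by
  obtain ⟨w, hw, hwa⟩ := h
  have ha' : ((w + 1 : Rn n) : ℂ) = a := by push_cast; rw [hwa]; ring
  by_contra ha1
  rcases Ideal.two_mem_or_natCast_mem_of_pow_two_mul_eq_one
      (pow_two_mul_eq_one_of_norm_eq_one hn (ha'.symm ▸ ha))
      (fun h1 => ha1 (by rw [← ha', h1, OneMemClass.coe_one])) (by simpa using I.neg_mem hw)
    with h | h
  exacts [hI2 h, hIn h]

theorem natCast_mem_of_one_sub_zetaR_sq_mem (hn : 2 < n) (h : 1 - zetaR n ^ 2 ∈ I) :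
    (n : Rn n) ∈ I := by
  have hζ := isPrimitiveRoot_zetaR (n := n) (by omega)
  refine Ideal.natCast_mem_of_pow_eq_one ?_ (hζ.pow_ne_one_of_pos_of_lt two_ne_zero hn) h
  rw [← pow_mul, mul_comm, pow_mul, hζ.pow_eq_one, one_pow]

theorem natCast_mem_of_inIdeal_mul_conj_zeta_sub_zeta (hn : 2 < n) {a : ℂ}
    (ha : InIdeal n I (a - 1)) (h : InIdeal n I (a * conj (zeta n) - zeta n)) :
    (n : Rn n) ∈ I := by
  have hζ0 : zeta n ≠ 0 := Complex.exp_ne_zero _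
  have hconj : conj (zeta n) = (zeta n)⁻¹ :=
    (inv_eq_conj ((isPrimitiveRoot_zeta (by omega)).norm'_eq_one (by omega))).symm
  -- `ζ (a ζ̄ - ζ) - (a - 1) = 1 - ζ ^ 2` because `ζ̄ = ζ⁻¹`
  have key : InIdeal n I ((1 - zetaR n ^ 2 : Rn n) : ℂ) := by
    convert (h.mul_left (zetaR n).2).sub ha using 1
    rw [hconj]
    push_cast [coe_zetaR]
    field_simp
    ring
  exact natCast_mem_of_one_sub_zetaR_sq_mem hn (inIdeal_coe_iff.1 key)

end Rn

theorem stmt18_general (n : ℕ) (hn : 3 ≤ n) (I : Ideal ↥(Rn n))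
    (hdvd2 : ¬ (Nat.card (↥(Rn n) ⧸ I) ∣ 2 ^ n.totient))
    (hdvdn : ¬ (Nat.card (↥(Rn n) ⧸ I) ∣ n ^ n.totient)) :
    ∀ g : ℂ → ℂ, IsIsometry g → g '' (Rn n : Set ℂ) = (Rn n : Set ℂ) →
      (∀ x ∈ (Rn n : Set ℂ), InIdeal n I (g x - x)) →
      ∃ t : ℂ, InIdeal n I t ∧ ∀ z : ℂ, g z = z + t := by
  rintro g ⟨a, b, ha, hg⟩ - hcol
  have hI2 : (2 : Rn n) ∉ I := fun h2 => hdvd2 (by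
    exact_mod_cast Rn.card_quotient_dvd_pow (by omega) I (m := 2) (by exact_mod_cast h2))
  have hIn : (n : Rn n) ∉ I := fun h => hdvdn (Rn.card_quotient_dvd_pow (by omega) I h)
  have hg0 : g 0 = b := by rcases hg with hg | hg <;> simp [hg]
  have hg1 : g 1 = a + b := by rcases hg with hg | hg <;> simp [hg]
  have hb : InIdeal n I b := by simpa [hg0] using hcol 0 (zero_mem _)
  have ha1 : InIdeal n I (a - 1) := by
    convert (hcol 1 (one_mem _)).sub hb using 1
    rw [hg1]
    ring
  rcases hg with hrot | hrefl
  · refine ⟨b, hb, fun z => ?_⟩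
    rw [hrot, Rn.eq_one_of_inIdeal_sub_one hn hI2 hIn ha ha1, one_mul]
  · refine (hIn (Rn.natCast_mem_of_inIdeal_mul_conj_zeta_sub_zeta hn ha1 ?_)).elim
    convert (hcol _ (zetaR n).2).sub hb using 1
    rw [hrefl, Rn.coe_zetaR]
    ring

/-- if `ℓ = card(R/I)` is finite and divides neither `2^{φ(n)}` nor
`n^{φ(n)}`, then every colour preserving isometry is a translation by an element of
`I`, i.e. `K = T_I`. -/
theorem stmt18 (n : ℕ) (hn : 3 ≤ n) (hn2 : n % 4 ≠ 2) (I : Ideal ↥(Rn n))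
    (hItop : I ≠ ⊤) (hIbot : I ≠ ⊥)
    (hfin : Nat.card (↥(Rn n) ⧸ I) ≠ 0)
    (hdvd2 : ¬ (Nat.card (↥(Rn n) ⧸ I) ∣ 2 ^ n.totient))
    (hdvdn : ¬ (Nat.card (↥(Rn n) ⧸ I) ∣ n ^ n.totient)) :
    ∀ g : ℂ → ℂ, IsIsometry g → g '' (Rn n : Set ℂ) = (Rn n : Set ℂ) →
      (∀ x ∈ (Rn n : Set ℂ), InIdeal n I (g x - x)) →
      ∃ t : ℂ, InIdeal n I t ∧ ∀ z : ℂ, g z = z + t :=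
  stmt18_general n hn I hdvd2 hdvdn
end
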